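/- Let L be a completely solvable Leibniz A-algebra with L = L² ∔ B, where B is a subalgebra of L, and let A be a minimal ideal of L. Then: (i) A ⊆ L² or A ⊆ B; (ii) A ⊆ B if and only if A ⊆ Z(L), in which case dim A = 1; and (iii) A ⊆ L² if and only if [A,L] = A. -/

import Mathlib

/-- A (right) Leibniz algebra structure on an `F`-vector space `L`:
a bilinear bracket satisfying `[x,[y,z]] = [[x,y],z] - [[x,z],y]`. -/
structure LeibnizAlg (F : Type*) (L : Type*) [Field F] [AddCommGroup L] [Module F L] where
  bracket : L →ₗ[F] L →ₗ[F] L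
  leibniz : ∀ x y z : L,
    bracket x (bracket y z) = bracket (bracket x y) z - bracket (bracket x z) y

namespace LeibnizAlg

variable {F : Type*} {L : Type*} [Field F] [AddCommGroup L] [Module F L]

/-- The product `[M, N]` of two subspaces: the span of all brackets `[m, n]`. -/
def prod (A : LeibnizAlg F L) (M N : Submodule F L) : Submodule F L :=
  Submodule.span F {z : L | ∃ m ∈ M, ∃ n ∈ N, z = A.bracket m n}

/-- A subalgebra: a subspace closed under the product. -/
def IsSubalgebra (A : LeibnizAlg F L) (S : Submodule F L) : Prop :=
  A.prod S S ≤ S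

/-- A (two-sided) ideal: `[I, L] ⊆ I` and `[L, I] ⊆ I`. -/
def IsIdeal (A : LeibnizAlg F L) (I : Submodule F L) : Prop :=
  A.prod I ⊤ ≤ I ∧ A.prod ⊤ I ≤ I

/-- Lower central series of a subspace `U`: `lcs U 0 = U = U¹`,
`lcs U k = U^(k+1)`, i.e. `lcs U (k+1) = [lcs U k, U]`. -/
def lcs (A : LeibnizAlg F L) (U : Submodule F L) : ℕ → Submodule F L
  | 0 => U
  | k + 1 => A.prod (lcs A U k) U

/-- `U` is nilpotent: `U^(n+1) = 0` for some `n`. -/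
def IsNilpotentSub (A : LeibnizAlg F L) (U : Submodule F L) : Prop :=
  ∃ n : ℕ, A.lcs U n = ⊥

/-- `U` is abelian: `[U, U] = 0`. -/
def IsAbelian (A : LeibnizAlg F L) (U : Submodule F L) : Prop :=
  A.prod U U = ⊥

/-- An `A`-algebra: every nilpotent subalgebra is abelian. -/
def IsAAlgebra (A : LeibnizAlg F L) : Prop :=
  ∀ U : Submodule F L, A.IsSubalgebra U → A.IsNilpotentSub U → A.IsAbelian U

/-- Derived series: `derSeries 0 = L`, `derSeries (k+1) = [derSeries k, derSeries k]`. -/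
def derSeries (A : LeibnizAlg F L) : ℕ → Submodule F L
  | 0 => ⊤
  | k + 1 => A.prod (derSeries A k) (derSeries A k)

/-- `L` is solvable: some term of the derived series vanishes. -/
def IsSolvable (A : LeibnizAlg F L) : Prop :=
  ∃ n : ℕ, A.derSeries n = ⊥

/-- The centralizer `Z_L(U)` of a subspace `U`. -/
def centralizer (A : LeibnizAlg F L) (U : Submodule F L) : Submodule F L where
  carrier := {x : L | ∀ u ∈ U, A.bracket x u = 0 ∧ A.bracket u x = 0}
  add_mem' := by
    intro a b ha hb u hu
    refine ⟨?_, ?_⟩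
    · rw [map_add, LinearMap.add_apply, (ha u hu).1, (hb u hu).1, add_zero]
    · rw [map_add, (ha u hu).2, (hb u hu).2, add_zero]
  zero_mem' := by
    intro u hu
    refine ⟨?_, ?_⟩
    · rw [map_zero, LinearMap.zero_apply]
    · rw [map_zero]
  smul_mem' := by
    intro c a ha u hu
    refine ⟨?_, ?_⟩
    · rw [map_smul, LinearMap.smul_apply, (ha u hu).1, smul_zero]
    · rw [map_smul, (ha u hu).2, smul_zero]

/-- The centre of the subalgebra `M`: elements of `M` centralizing `M`. -/
def centerOf (A : LeibnizAlg F L) (M : Submodule F L) : Submodule F L :=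
  M ⊓ A.centralizer M

/-- `N` is the nilradical: the largest nilpotent ideal. -/
def IsNilradical (A : LeibnizAlg F L) (N : Submodule F L) : Prop :=
  A.IsIdeal N ∧ A.IsNilpotentSub N ∧
    ∀ I : Submodule F L, A.IsIdeal I → A.IsNilpotentSub I → I ≤ N

/-- A minimal ideal: a nonzero ideal containing no ideal other than `0` and itself. -/
def IsMinimalIdeal (A : LeibnizAlg F L) (I : Submodule F L) : Prop :=
  A.IsIdeal I ∧ I ≠ ⊥ ∧ ∀ J : Submodule F L, A.IsIdeal J → J ≤ I → J = ⊥ ∨ J = I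

/-- A maximal subalgebra. -/
def IsMaximalSubalgebra (A : LeibnizAlg F L) (M : Submodule F L) : Prop :=
  A.IsSubalgebra M ∧ M ≠ ⊤ ∧
    ∀ S : Submodule F L, A.IsSubalgebra S → M ≤ S → S = M ∨ S = ⊤

/-- `L` is φ-free: every ideal contained in all maximal subalgebras is zero. -/
def IsPhiFree (A : LeibnizAlg F L) : Prop :=
  ∀ I : Submodule F L, A.IsIdeal I →
    (∀ M : Submodule F L, A.IsMaximalSubalgebra M → I ≤ M) → I = ⊥

/-- `Asoc L`: the sum of the abelian minimal ideals. -/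
def asoc (A : LeibnizAlg F L) : Submodule F L :=
  sSup {I : Submodule F L | A.IsMinimalIdeal I ∧ A.IsAbelian I}

/-- A Cartan subalgebra: a nilpotent, self-normalizing subalgebra. -/
def IsCartan (A : LeibnizAlg F L) (C : Submodule F L) : Prop :=
  A.IsSubalgebra C ∧ A.IsNilpotentSub C ∧
    ∀ x : L, (∀ c ∈ C, A.bracket x c ∈ C ∧ A.bracket c x ∈ C) → x ∈ C

/-- A maximal nilpotent subalgebra. -/
def IsMaxNilpotentSubalgebra (A : LeibnizAlg F L) (U : Submodule F L) : Prop :=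
  A.IsSubalgebra U ∧ A.IsNilpotentSub U ∧
    ∀ V : Submodule F L, A.IsSubalgebra V → A.IsNilpotentSub V → U ≤ V → V = U

end LeibnizAlg

/-!
Write `D = L²`.  Both `D` and `B` are abelian: `D` because it is a nilpotent subalgebra of an
A-algebra, `B` because `[B, B] ⊆ D ∩ B = 0`.  Expanding `L² = [D + B, D + B]` with the Leibniz
identity gives `D = [D, B]`, so the commuting right multiplications by `B` make `D` a module over
an abelian Lie algebra with `[B, D] = D`; by Fitting's lemma its zero weight space vanishes, and
that weight space contains `Z(L) ∩ D`.  Hence `Z(L) ∩ D = 0` and then `Z(L) ⊆ B`.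

A minimal ideal `W` meets `D` in `0` or in `W`; in the first case it is central.  If `W ⊆ D`,
then `[W, L]` is an ideal inside `W`; were it `0`, the subalgebra `B + W` would be nilpotent,
hence abelian, making `W` central and so `W ⊆ Z(L) ∩ D = 0`.
-/

section FittingDecomposition

attribute [local instance] LieRing.ofAssociativeRing

open LieModule in
theorem Module.End.iInf_ker_eq_bot_of_iSup_range_eq_top
    {F V E : Type*} [Field F] [AddCommGroup V] [Module F V] [FiniteDimensional F V]
    [AddCommGroup E] [Module F E]
    (ρ : E →ₗ[F] Module.End F V) (hρ : ∀ a b, Commute (ρ a) (ρ b))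
    (hrange : ⨆ a, LinearMap.range (ρ a) = ⊤) :
    ⨅ a, LinearMap.ker (ρ a) = ⊥ := by
  -- `V` is a module over the abelian, hence nilpotent, Lie algebra `range ρ`.
  let H : LieSubalgebra F (Module.End F V) :=
    { toSubmodule := LinearMap.range ρ
      lie_mem' := by
        rintro _ _ ⟨a, rfl⟩ ⟨b, rfl⟩
        rw [(hρ a b).lie_eq]
        exact Submodule.zero_mem _ }
  have : IsLieAbelian H := ⟨by
    rintro ⟨_, a, rfl⟩ ⟨_, b, rfl⟩
    exact Subtype.ext (hρ a b).lie_eq⟩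
  have hlie : ⁅(⊤ : LieIdeal F H), (⊤ : LieSubmodule F H V)⁆ = ⊤ := by
    rw [eq_top_iff, ← LieSubmodule.toSubmodule_le_toSubmodule, LieSubmodule.top_toSubmodule,
      ← hrange, iSup_le_iff]
    rintro a _ ⟨v, rfl⟩
    exact LieSubmodule.lie_mem_lie (LieSubmodule.mem_top (⟨ρ a, a, rfl⟩ : H))
      (LieSubmodule.mem_top v)
  have hlcs : ∀ k, lowerCentralSeries F H V k = ⊤ := by
    intro k
    induction k with
    | zero => rfl
    | succ k ih => rw [LieModule.lowerCentralSeries_succ, ih, hlie]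
  have hfitting : posFittingComp F H V = ⊤ := by
    rw [← iInf_lowerCentralSeries_eq_posFittingComp]
    simp [hlcs]
  have hzero : genWeightSpace V (0 : H → F) = ⊥ :=
    eq_bot_of_isCompl_top (hfitting ▸ isCompl_genWeightSpace_zero_posFittingComp F H V)
  rw [eq_bot_iff]
  intro v hv
  have hv₀ : v ∈ genWeightSpace V (0 : H → F) := by
    rw [mem_genWeightSpace]
    rintro ⟨_, a, rfl⟩
    exact ⟨1, by simpa using (Submodule.mem_iInf _).mp hv a⟩
  rw [hzero] at hv₀
  exact hv₀

end FittingDecomposition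

namespace LeibnizAlg

variable {F L : Type*} [Field F] [AddCommGroup L] [Module F L] (A : LeibnizAlg F L)

section Products

variable {M N P I : Submodule F L}

lemma prod_eq_map₂ (M N : Submodule F L) : A.prod M N = Submodule.map₂ A.bracket M N := by
  rw [Submodule.map₂_eq_span_image2, prod]
  congr 1
  ext z
  simp [Set.mem_image2, eq_comm]

lemma bracket_mem_prod {m n : L} (hm : m ∈ M) (hn : n ∈ N) : A.bracket m n ∈ A.prod M N :=
  Submodule.subset_span ⟨m, hm, n, hn, rfl⟩

lemma prod_le_iff : A.prod M N ≤ P ↔ ∀ m ∈ M, ∀ n ∈ N, A.bracket m n ∈ P := by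
  rw [prod_eq_map₂]
  exact Submodule.map₂_le

lemma prod_sup_left (M N P : Submodule F L) :
    A.prod (M ⊔ N) P = A.prod M P ⊔ A.prod N P := by
  simp only [prod_eq_map₂, Submodule.map₂_sup_left]

lemma prod_sup_right (M N P : Submodule F L) :
    A.prod M (N ⊔ P) = A.prod M N ⊔ A.prod M P := by
  simp only [prod_eq_map₂, Submodule.map₂_sup_right]

lemma prod_mono (hM : M ≤ P) (hN : N ≤ I) : A.prod M N ≤ A.prod P I :=
  (A.prod_le_iff).2 fun _ hm _ hn => A.bracket_mem_prod (hM hm) (hN hn)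

lemma bracket_mem_derSeries_one (x y : L) : A.bracket x y ∈ A.derSeries 1 :=
  A.bracket_mem_prod Submodule.mem_top Submodule.mem_top

lemma prod_le_derSeries_one (M N : Submodule F L) : A.prod M N ≤ A.derSeries 1 :=
  (A.prod_le_iff).2 fun m _ n _ => A.bracket_mem_derSeries_one m n

variable {A} in
lemma IsAbelian.bracket_eq_zero {m n : L} (h : A.IsAbelian M) (hm : m ∈ M) (hn : n ∈ M) :
    A.bracket m n = 0 := by
  have := A.bracket_mem_prod hm hn
  rwa [show A.prod M M = ⊥ from h, Submodule.mem_bot] at this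

variable {A} in
lemma IsIdeal.bracket_mem_left {x y : L} (hI : A.IsIdeal I) (hx : x ∈ I) :
    A.bracket x y ∈ I :=
  hI.1 (A.bracket_mem_prod hx Submodule.mem_top)

variable {A} in
lemma IsIdeal.bracket_mem_right {x y : L} (hI : A.IsIdeal I) (hy : y ∈ I) :
    A.bracket x y ∈ I :=
  hI.2 (A.bracket_mem_prod Submodule.mem_top hy)

variable {A} in
lemma IsIdeal.inf (hM : A.IsIdeal M) (hN : A.IsIdeal N) : A.IsIdeal (M ⊓ N) :=
  ⟨(A.prod_le_iff).2 fun _ hm _ _ => ⟨hM.bracket_mem_left hm.1, hN.bracket_mem_left hm.2⟩,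
    (A.prod_le_iff).2 fun _ _ _ hn => ⟨hM.bracket_mem_right hn.1, hN.bracket_mem_right hn.2⟩⟩

lemma isIdeal_derSeries_one : A.IsIdeal (A.derSeries 1) :=
  ⟨A.prod_le_derSeries_one _ _, A.prod_le_derSeries_one _ _⟩

end Products

section Centre

variable {I W : Submodule F L}

lemma mem_centerOf_top_iff {z : L} :
    z ∈ A.centerOf ⊤ ↔ ∀ x : L, A.bracket z x = 0 ∧ A.bracket x z = 0 :=
  ⟨fun hz x => hz.2 x Submodule.mem_top, fun h => ⟨Submodule.mem_top, fun x _ => h x⟩⟩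

lemma isIdeal_of_le_centerOf_top (h : I ≤ A.centerOf ⊤) : A.IsIdeal I :=
  ⟨(A.prod_le_iff).2 fun z hz x _ => by
      rw [((A.mem_centerOf_top_iff).1 (h hz) x).1]; exact I.zero_mem,
    (A.prod_le_iff).2 fun x _ z hz => by
      rw [((A.mem_centerOf_top_iff).1 (h hz) x).2]; exact I.zero_mem⟩

lemma le_centerOf_top_of_inf_derSeries_one_eq_bot (hI : A.IsIdeal I)
    (h : I ⊓ A.derSeries 1 = ⊥) : I ≤ A.centerOf ⊤ := by
  have hzero : ∀ y ∈ I, y ∈ A.derSeries 1 → y = 0 := fun y hy hyD => by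
    have : y ∈ I ⊓ A.derSeries 1 := ⟨hy, hyD⟩
    rwa [h, Submodule.mem_bot] at this
  exact fun z hz => (A.mem_centerOf_top_iff).2 fun x =>
    ⟨hzero _ (hI.bracket_mem_left hz) (A.bracket_mem_derSeries_one _ _),
      hzero _ (hI.bracket_mem_right hz) (A.bracket_mem_derSeries_one _ _)⟩

variable {A} in
lemma IsMinimalIdeal.le_derSeries_one_or_le_centerOf_top (hW : A.IsMinimalIdeal W) :
    W ≤ A.derSeries 1 ∨ W ≤ A.centerOf ⊤ := by
  rcases hW.2.2 _ (hW.1.inf A.isIdeal_derSeries_one) inf_le_left with hbot | heq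
  · exact Or.inr (A.le_centerOf_top_of_inf_derSeries_one_eq_bot hW.1 hbot)
  · exact Or.inl (heq ▸ inf_le_right)

variable {A} in
lemma IsMinimalIdeal.finrank_eq_one_of_le_centerOf_top (hW : A.IsMinimalIdeal W)
    (hWZ : W ≤ A.centerOf ⊤) : Module.finrank F W = 1 := by
  obtain ⟨w, hw, hw0⟩ := (Submodule.ne_bot_iff W).1 hW.2.1
  have hspan : F ∙ w ≤ W := (Submodule.span_singleton_le_iff_mem w W).2 hw
  rcases hW.2.2 _ (A.isIdeal_of_le_centerOf_top (hspan.trans hWZ)) hspan with hbot | heq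
  · exact absurd (Submodule.span_singleton_eq_bot.1 hbot) hw0
  · rw [← heq]; exact finrank_span_singleton hw0

end Centre

section Leibniz

lemma bracket_bracket_comm_of_bracket_eq_zero {b c : L} (h : A.bracket b c = 0) (x : L) :
    A.bracket (A.bracket x b) c = A.bracket (A.bracket x c) b := by
  have := A.leibniz x b c
  rw [h, map_zero] at this
  exact sub_eq_zero.1 this.symm

lemma prod_top_derSeries_one_le : A.prod ⊤ (A.derSeries 1) ≤ A.prod (A.derSeries 1) ⊤ := by
  rw [prod_le_iff]
  intro y _ p hp
  have hgen : A.derSeries 1 ≤ (A.prod (A.derSeries 1) ⊤).comap (A.bracket y) :=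
    (A.prod_le_iff).2 fun x _ z _ => by
      rw [Submodule.mem_comap, A.leibniz]
      exact sub_mem (A.bracket_mem_prod (A.bracket_mem_derSeries_one _ _) Submodule.mem_top)
        (A.bracket_mem_prod (A.bracket_mem_derSeries_one _ _) Submodule.mem_top)
  exact hgen hp

lemma isIdeal_prod_top {W : Submodule F L} (hW : A.IsIdeal W) (hWD : W ≤ A.derSeries 1)
    (hD : A.IsAbelian (A.derSeries 1)) : A.IsIdeal (A.prod W ⊤) := by
  refine ⟨(A.prod_le_iff).2 fun p hp y _ => ?_, (A.prod_le_iff).2 fun y _ p hp => ?_⟩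
  · have hgen : A.prod W ⊤ ≤ (A.prod W ⊤).comap (A.bracket.flip y) :=
      (A.prod_le_iff).2 fun w hw x _ => by
        rw [Submodule.mem_comap, LinearMap.flip_apply, eq_add_of_sub_eq (A.leibniz w x y).symm]
        exact add_mem (A.bracket_mem_prod hw Submodule.mem_top)
          (A.bracket_mem_prod (hW.bracket_mem_left hw) Submodule.mem_top)
    exact hgen hp
  · -- `[[y, x], w] = 0` because both factors lie in the abelian ideal `L²`.
    have hgen : A.prod W ⊤ ≤ (A.prod W ⊤).comap (A.bracket y) :=
      (A.prod_le_iff).2 fun w hw x _ => by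
        rw [Submodule.mem_comap, A.leibniz,
          hD.bracket_eq_zero (A.bracket_mem_derSeries_one y x) (hWD hw), sub_zero]
        exact A.bracket_mem_prod (hW.bracket_mem_right hw) Submodule.mem_top
    exact hgen hp

end Leibniz

def rightMulDerSeriesOne : L →ₗ[F] Module.End F (A.derSeries 1) :=
  LinearMap.mk₂ F (fun b d => ⟨A.bracket d b, A.bracket_mem_derSeries_one _ _⟩)
    (fun _ _ _ => Subtype.ext (map_add _ _ _)) (fun _ _ _ => Subtype.ext (map_smul _ _ _))
    (fun _ _ _ => Subtype.ext (LinearMap.map_add₂ _ _ _ _))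
    (fun _ _ _ => Subtype.ext (LinearMap.map_smul₂ _ _ _ _))

section Decomposition

variable {B : Submodule F L}

lemma isAbelian_derSeries_one (hA : A.IsAAlgebra) (hcs : A.IsNilpotentSub (A.derSeries 1)) :
    A.IsAbelian (A.derSeries 1) :=
  hA _ (A.prod_le_derSeries_one _ _) hcs

lemma isAbelian_of_inf_derSeries_one_eq_bot (hB : A.IsSubalgebra B)
    (hdisj : A.derSeries 1 ⊓ B = ⊥) : A.IsAbelian B := by
  rw [IsAbelian, ← le_bot_iff, ← hdisj]
  exact le_inf (A.prod_le_derSeries_one B B) hB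

lemma exists_add_of_derSeries_one_sup_eq_top (hsup : A.derSeries 1 ⊔ B = ⊤) (x : L) :
    ∃ u ∈ A.derSeries 1, ∃ b ∈ B, u + b = x :=
  Submodule.mem_sup.1 (hsup ▸ Submodule.mem_top)

lemma derSeries_one_le_prod (hD : A.IsAbelian (A.derSeries 1)) (hB : A.IsAbelian B)
    (hsup : A.derSeries 1 ⊔ B = ⊤) : A.derSeries 1 ≤ A.prod (A.derSeries 1) B := by
  have hDL : A.prod (A.derSeries 1) ⊤ = A.prod (A.derSeries 1) B := by
    conv_lhs => rw [← hsup, prod_sup_right, hD, bot_sup_eq]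
  have hBL : A.prod B ⊤ ≤ A.prod ⊤ (A.derSeries 1) := by
    conv_lhs => rw [← hsup, prod_sup_right, hB, sup_bot_eq]
    exact A.prod_mono le_top le_rfl
  calc A.derSeries 1 = A.prod (A.derSeries 1 ⊔ B) ⊤ := by rw [hsup]; rfl
    _ = A.prod (A.derSeries 1) ⊤ ⊔ A.prod B ⊤ := A.prod_sup_left _ _ _
    _ ≤ A.prod (A.derSeries 1) B := by
        rw [← hDL]; exact sup_le le_rfl (hBL.trans A.prod_top_derSeries_one_le)

theorem centerOf_top_inf_derSeries_one_eq_bot [FiniteDimensional F L]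
    (hD : A.IsAbelian (A.derSeries 1)) (hB : A.IsAbelian B) (hsup : A.derSeries 1 ⊔ B = ⊤) :
    A.centerOf ⊤ ⊓ A.derSeries 1 = ⊥ := by
  set D := A.derSeries 1
  let ρ : B →ₗ[F] Module.End F D := A.rightMulDerSeriesOne ∘ₗ B.subtype
  have hρ : ∀ b c, Commute (ρ b) (ρ c) := fun b c => LinearMap.ext fun d => Subtype.ext
    (A.bracket_bracket_comm_of_bracket_eq_zero (hB.bracket_eq_zero c.2 b.2) d)
  have hrange : ⨆ b, LinearMap.range (ρ b) = ⊤ := by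
    have hmap : D ≤ (⨆ b, LinearMap.range (ρ b)).map D.subtype := by
      refine (A.derSeries_one_le_prod hD hB hsup).trans ((A.prod_le_iff).2 fun u hu b hb => ?_)
      exact Submodule.mem_map_of_mem <| Submodule.mem_iSup_of_mem
        (p := fun b => LinearMap.range (ρ b)) _ <| LinearMap.mem_range_self (ρ ⟨b, hb⟩) ⟨u, hu⟩
    rw [eq_top_iff]
    rintro ⟨d, hd⟩ -
    obtain ⟨y, hy, rfl⟩ := hmap hd
    simpa using hy
  have hker := Module.End.iInf_ker_eq_bot_of_iSup_range_eq_top ρ hρ hrange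
  rw [eq_bot_iff]
  rintro z ⟨hz, hzD⟩
  have hz₀ : (⟨z, hzD⟩ : D) ∈ ⨅ b, LinearMap.ker (ρ b) :=
    (Submodule.mem_iInf _).2 fun b => Subtype.ext ((A.mem_centerOf_top_iff).1 hz b).1
  rw [hker] at hz₀
  simpa using hz₀

theorem centerOf_top_le (hD : A.IsAbelian (A.derSeries 1)) (hB : A.IsAbelian B)
    (hsup : A.derSeries 1 ⊔ B = ⊤) (hZD : A.centerOf ⊤ ⊓ A.derSeries 1 = ⊥) :
    A.centerOf ⊤ ≤ B := by
  intro z hz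
  obtain ⟨u, hu, b, hb, rfl⟩ := A.exists_add_of_derSeries_one_sup_eq_top hsup z
  have hzc := (A.mem_centerOf_top_iff).1 hz
  suffices hu₀ : u ∈ A.centerOf ⊤ ⊓ A.derSeries 1 by
    rw [hZD, Submodule.mem_bot] at hu₀
    rwa [hu₀, zero_add]
  refine ⟨(A.mem_centerOf_top_iff).2 fun x => ?_, hu⟩
  obtain ⟨v, hv, c, hc, rfl⟩ := A.exists_add_of_derSeries_one_sup_eq_top hsup x
  have huc : A.bracket u c = 0 := by
    rw [← add_sub_cancel_right u b, map_sub, LinearMap.sub_apply, (hzc c).1,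
      hB.bracket_eq_zero hb hc, sub_zero]
  have hcu : A.bracket c u = 0 := by
    rw [← add_sub_cancel_right u b, map_sub, (hzc c).2, hB.bracket_eq_zero hc hb, sub_zero]
  simp only [map_add, LinearMap.add_apply, huc, hcu, hD.bracket_eq_zero hu hv,
    hD.bracket_eq_zero hv hu, add_zero, true_and]

lemma le_centerOf_top_of_prod_top_eq_bot (hA : A.IsAAlgebra) (hD : A.IsAbelian (A.derSeries 1))
    (hB : A.IsAbelian B) (hsup : A.derSeries 1 ⊔ B = ⊤) {W : Submodule F L}
    (hW : A.IsIdeal W) (hWD : W ≤ A.derSeries 1) (hWL : A.prod W ⊤ = ⊥) :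
    W ≤ A.centerOf ⊤ := by
  have hWx : ∀ w ∈ W, ∀ x, A.bracket w x = 0 := fun w hw x => by
    have := A.bracket_mem_prod hw (Submodule.mem_top (x := x))
    rwa [hWL, Submodule.mem_bot] at this
  have hsq : A.prod (B ⊔ W) (B ⊔ W) ≤ W := (A.prod_le_iff).2 fun x hx y hy => by
    obtain ⟨b, hb, w, hw, rfl⟩ := Submodule.mem_sup.1 hx
    obtain ⟨c, hc, w', hw', rfl⟩ := Submodule.mem_sup.1 hy
    simp only [map_add, LinearMap.add_apply, hWx w hw, hB.bracket_eq_zero hb hc, zero_add,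
      add_zero]
    exact hW.bracket_mem_right hw'
  have hnil : A.IsNilpotentSub (B ⊔ W) :=
    ⟨2, le_bot_iff.1 (hWL ▸ A.prod_mono hsq le_top)⟩
  have hBW : A.IsAbelian (B ⊔ W) := hA _ (hsq.trans le_sup_right) hnil
  refine fun w hw => (A.mem_centerOf_top_iff).2 fun x => ⟨hWx w hw x, ?_⟩
  obtain ⟨v, hv, c, hc, rfl⟩ := A.exists_add_of_derSeries_one_sup_eq_top hsup x
  rw [map_add, LinearMap.add_apply, hD.bracket_eq_zero hv (hWD hw),
    hBW.bracket_eq_zero (Submodule.mem_sup_left hc) (Submodule.mem_sup_right hw), add_zero]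

end Decomposition

end LeibnizAlg

/-- Let `L = L² ∔ B` be a completely solvable Leibniz A-algebra, `B` a
subalgebra, and `W` a minimal ideal of `L`.  Then:
(i) `W ⊆ L²` or `W ⊆ B`;
(ii) `W ⊆ B` iff `W ⊆ Z(L)`, in which case `dim W = 1`; and
(iii) `W ⊆ L²` iff `[W, L] = W`. -/
theorem minimal_ideal_location
    {F L : Type*} [Field F] [AddCommGroup L] [Module F L] [FiniteDimensional F L]
    (A : LeibnizAlg F L) (hA : A.IsAAlgebra)
    (hcs : A.IsNilpotentSub (A.derSeries 1))
    (B : Submodule F L) (hB : A.IsSubalgebra B)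
    (hdisj : A.derSeries 1 ⊓ B = ⊥) (hsup : A.derSeries 1 ⊔ B = ⊤)
    (W : Submodule F L) (hW : A.IsMinimalIdeal W) :
    (W ≤ A.derSeries 1 ∨ W ≤ B) ∧
    ((W ≤ B ↔ W ≤ A.centerOf ⊤) ∧ (W ≤ B → Module.finrank F W = 1)) ∧
    (W ≤ A.derSeries 1 ↔ A.prod W ⊤ = W) := by
  have hD := A.isAbelian_derSeries_one hA hcs
  have hBab := A.isAbelian_of_inf_derSeries_one_eq_bot hB hdisj
  have hZD := A.centerOf_top_inf_derSeries_one_eq_bot hD hBab hsup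
  have hZB := A.centerOf_top_le hD hBab hsup hZD
  have hWZ_of_le_B : W ≤ B → W ≤ A.centerOf ⊤ := fun hWB =>
    A.le_centerOf_top_of_inf_derSeries_one_eq_bot hW.1
      ((disjoint_iff.2 hdisj).symm.mono_left hWB).eq_bot
  have hprod_of_le_D : W ≤ A.derSeries 1 → A.prod W ⊤ = W := fun hWD =>
    (hW.2.2 _ (A.isIdeal_prod_top hW.1 hWD hD) hW.1.1).resolve_left fun hbot =>
      hW.2.1 <| le_bot_iff.1 <| hZD ▸
        le_inf (A.le_centerOf_top_of_prod_top_eq_bot hA hD hBab hsup hW.1 hWD hbot) hWD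
  exact ⟨hW.le_derSeries_one_or_le_centerOf_top.imp_right hZB.trans',
    ⟨⟨hWZ_of_le_B, hZB.trans'⟩,
      fun hWB => hW.finrank_eq_one_of_le_centerOf_top (hWZ_of_le_B hWB)⟩,
    ⟨hprod_of_le_D, fun h => h ▸ A.prod_le_derSeries_one W ⊤⟩⟩
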